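/- Let A = (Σ, Q, δ) be a semi-automaton over a binary alphabet Σ = {a, b} with n > 2 states. Then every subset of Q of size n-1 is reachable from Q if and only if exactly one of the two letters acts as a cyclic permutation of Q with a single orbit and the other letter has rank n-1. -/

import Mathlib

open Finset

universe u v

variable {Q : Type u} {A : Type v}

/-- Extended transition function on words (lists of letters). -/
def dw (δ : Q → A → Q) (q : Q) (w : List A) : Q := w.foldl δ q

/-- A subset `S` of the state set is reachable if it is the image of the
full state set under some word. -/
def reach [Fintype Q] [DecidableEq Q] (δ : Q → A → Q) (S : Finset Q) : Prop :=
  ∃ w : List A, Finset.univ.image (fun q => dw δ q w) = S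

/-- Rank of a word: cardinality of the image of the state set under it. -/
def rkw [Fintype Q] [DecidableEq Q] (δ : Q → A → Q) (w : List A) : ℕ :=
  (Finset.univ.image (fun q => dw δ q w)).card

/-- Rank of a letter. -/
def rkl [Fintype Q] [DecidableEq Q] (δ : Q → A → Q) (a : A) : ℕ :=
  (Finset.univ.image (fun q => δ q a)).card

/-- A map is a cyclic permutation with a single orbit. -/
def isCyclicPerm (f : Q → Q) : Prop :=
  Function.Bijective f ∧ ∀ p q : Q, ∃ k : ℕ, f^[k] p = q

/-- Two subsets of states are distinguishable in the power automaton: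
some word maps exactly one of them to a singleton. -/
def distinguishable [DecidableEq Q] (δ : Q → A → Q) (S T : Finset Q) : Prop :=
  ∃ u : List A,
    Xor' ((S.image (fun q => dw δ q u)).card = 1)
         ((T.image (fun q => dw δ q u)).card = 1)

/-- The set of synchronizing words. -/
def Syn [Fintype Q] [DecidableEq Q] (δ : Q → A → Q) : Set (List A) :=
  {w | (Finset.univ.image (fun q => dw δ q w)).card = 1}

/-- The Nerode right-congruence of a language. -/
def nerode (L : Set (List A)) : Setoid (List A) where
  r u v := ∀ x : List A, u ++ x ∈ L ↔ v ++ x ∈ L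
  iseqv := ⟨fun _ _ => Iff.rfl, fun h x => (h x).symm, fun h1 h2 x => (h1 x).trans (h2 x)⟩

/-- State complexity of a language: number of Nerode classes. -/
noncomputable def sc (L : Set (List A)) : ℕ := Nat.card (Quotient (nerode L))

/-- Complete reachability. -/
def complReach [Fintype Q] [DecidableEq Q] (δ : Q → A → Q) : Prop :=
  ∀ S : Finset Q, S.Nonempty → ∃ w : List A, Finset.univ.image (fun q => dw δ q w) = S

/-- The permutation group generated by the permutational letters. -/
def permGroup [Fintype Q] [DecidableEq Q] (δ : Q → A → Q) : Subgroup (Equiv.Perm Q) :=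
  Subgroup.closure {π : Equiv.Perm Q | ∃ a : A, ∀ q : Q, π q = δ q a}

/-!
If neither letter permutes `Q`, a word whose image has `n - 1` states must end in a letter whose
own image is already that set, so at most two such sets are reachable, fewer than `n`. Hence one
letter `b` permutes `Q` while the other, `a`, has rank `n - 1`, say with image `Q \ {p}`. Reading a
word letter by letter, `a` resets the missing state to `p` and `b` moves it along `b`, so the
reachable `(n - 1)`-sets are exactly the `Q \ {bᵏ p}`: all of them are reachable iff the `b`-orbit
of `p` is `Q`, i.e. iff `b` is an `n`-cycle.
-/

open Function

section Words

variable (δ : Q → A → Q)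

lemma dw_append (q : Q) (u v : List A) : dw δ q (u ++ v) = dw δ (dw δ q u) v :=
  List.foldl_append

lemma dw_replicate (x : A) (k : ℕ) : (dw δ · (List.replicate k x)) = (δ · x)^[k] := by
  funext q
  induction k generalizing q with
  | zero => rfl
  | succ k ih => exact ih (δ q x)

lemma bijective_dw {w : List A} (hw : ∀ x ∈ w, Bijective (δ · x)) : Bijective (dw δ · w) := by
  induction w with
  | nil => exact bijective_id
  | cons x w ih =>
    exact (ih fun y hy => hw y (List.mem_cons_of_mem x hy)).comp (hw x List.mem_cons_self)

variable [DecidableEq Q]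

lemma image_dw_append (S : Finset Q) (u v : List A) :
    S.image (dw δ · (u ++ v)) = (S.image (dw δ · u)).image (dw δ · v) := by
  simp only [image_image, comp_def, dw_append]

variable [Fintype Q]

lemma image_dw_nil : univ.image (dw δ · []) = univ :=
  image_id'

lemma image_dw_append_singleton_subset (u : List A) (x : A) :
    univ.image (dw δ · (u ++ [x])) ⊆ univ.image (δ · x) := by
  rw [image_dw_append]
  exact image_subset_image (subset_univ _)

lemma rkw_le_rkl_of_mem {w : List A} {x : A} (hx : x ∈ w) : rkw δ w ≤ rkl δ x := by
  obtain ⟨u, v, rfl⟩ := List.mem_iff_append.1 hx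
  calc rkw δ (u ++ x :: v)
      = ((univ.image (dw δ · (u ++ [x]))).image (dw δ · v)).card := by
        rw [rkw, ← image_dw_append, List.append_assoc, List.singleton_append]
    _ ≤ (univ.image (dw δ · (u ++ [x]))).card := card_image_le
    _ ≤ rkl δ x := card_le_card (image_dw_append_singleton_subset δ u x)

lemma exists_mem_not_bijective_of_image_dw_ne_univ {w : List A}
    (hw : univ.image (dw δ · w) ≠ univ) : ∃ x ∈ w, ¬ Bijective (δ · x) := by
  by_contra! h
  exact hw (image_univ_of_surjective (bijective_dw δ h).2)

lemma rkl_lt_card_of_not_bijective {x : A} (hx : ¬ Bijective (δ · x)) :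
    rkl δ x < Fintype.card Q := by
  refine (card_le_univ _).lt_of_ne fun h => hx (Finite.surjective_iff_bijective.1 fun q => ?_)
  have hq : q ∈ univ.image (δ · x) := by
    rw [eq_univ_of_card _ h]
    exact mem_univ q
  simpa using hq

end Words

section Erase

variable [Fintype Q] [DecidableEq Q]

lemma univ_erase_ne_univ (q : Q) : univ.erase q ≠ univ :=
  fun h => (erase_eq_self.1 h) (mem_univ q)

lemma exists_eq_univ_erase_of_card_eq [Nonempty Q] {S : Finset Q}
    (hS : S.card = Fintype.card Q - 1) : ∃ q, S = univ.erase q := by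
  have hcompl : Sᶜ.card = 1 := by
    have := Fintype.card_pos (α := Q)
    rw [card_compl]
    omega
  obtain ⟨q, hq⟩ := card_eq_one.1 hcompl
  exact ⟨q, by rw [← compl_singleton, ← hq, compl_compl]⟩

lemma image_univ_erase_of_bijective {f : Q → Q} (hf : Bijective f) (p : Q) :
    (univ.erase p).image f = univ.erase (f p) := by
  rw [image_erase hf.1, image_univ_of_surjective hf.2]

end Erase

lemma isCyclicPerm_of_forall_exists_iterate_eq [Finite Q] {f : Q → Q} (hf : Bijective f) {p : Q}
    (h : ∀ q, ∃ k, f^[k] p = q) : isCyclicPerm f := by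
  set e : Equiv.Perm Q := Equiv.ofBijective f hf
  have hiter : ∀ k q, (e ^ k) q = f^[k] q := fun k q => by
    rw [Equiv.Perm.coe_pow]
    rfl
  have hsame : ∀ q, e.SameCycle p q := fun q => by
    obtain ⟨k, rfl⟩ := h q
    exact ⟨k, by rw [zpow_natCast, hiter]⟩
  refine ⟨hf, fun q r => ?_⟩
  obtain ⟨k, hk⟩ := ((hsame q).symm.trans (hsame r)).exists_nat_pow_eq
  exact ⟨k, (hiter k q).symm.trans hk⟩

section Reach

variable [Fintype Q] [DecidableEq Q]

theorem reach_univ_erase_of_isCyclicPerm (δ : Q → A → Q) {c d : A} (hc : isCyclicPerm (δ · c))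
    {p : Q} (hd : univ.image (δ · d) = univ.erase p) (q : Q) : reach δ (univ.erase q) := by
  obtain ⟨k, hk⟩ := hc.2 p q
  refine ⟨d :: List.replicate k c, ?_⟩
  rw [← List.singleton_append, image_dw_append, dw_replicate]
  change (univ.image (δ · d)).image _ = _
  rw [hd, image_univ_erase_of_bijective (hc.1.iterate k), hk]

lemma exists_image_eq_of_reach_univ_erase (δ : Q → A → Q) (hδ : ∀ x, ¬ Bijective (δ · x))
    {q : Q} (hq : reach δ (univ.erase q)) : ∃ x, univ.image (δ · x) = univ.erase q := by
  obtain ⟨w, hw⟩ := hq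
  rcases w.eq_nil_or_concat' with rfl | ⟨u, x, rfl⟩
  · exact (univ_erase_ne_univ q (hw.symm.trans (image_dw_nil δ))).elim
  · refine ⟨x, (eq_of_subset_of_card_le (hw ▸ image_dw_append_singleton_subset δ u x) ?_).symm⟩
    have := rkl_lt_card_of_not_bijective δ (hδ x)
    rw [rkl] at this
    rw [card_erase_of_mem (mem_univ q), card_univ]
    omega

lemma exists_not_bijective_rkl_eq_of_reach_univ_erase [Nonempty Q] (δ : Q → A → Q)
    (hreach : ∀ q : Q, reach δ (univ.erase q)) :
    ∃ c, ¬ Bijective (δ · c) ∧ rkl δ c = Fintype.card Q - 1 := by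
  obtain ⟨q₀⟩ := ‹Nonempty Q›
  obtain ⟨w, hw⟩ := hreach q₀
  obtain ⟨c, hcw, hc⟩ :=
    exists_mem_not_bijective_of_image_dw_ne_univ δ (hw ▸ univ_erase_ne_univ q₀)
  refine ⟨c, hc, le_antisymm (Nat.le_sub_one_of_lt (rkl_lt_card_of_not_bijective δ hc)) ?_⟩
  simpa [rkw, hw] using rkw_le_rkl_of_mem δ hcw

theorem card_le_card_of_reach_univ_erase [Fintype A] (δ : Q → A → Q)
    (hδ : ∀ x, ¬ Bijective (δ · x)) (hreach : ∀ q : Q, reach δ (univ.erase q)) :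
    Fintype.card Q ≤ Fintype.card A := by
  choose x hx using fun q => exists_image_eq_of_reach_univ_erase δ hδ (hreach q)
  exact Fintype.card_le_of_injective x fun p q hpq =>
    (erase_inj univ (mem_univ p)).1 (by rw [← hx p, ← hx q, hpq])

lemma exists_iterate_eq_of_image_dw_eq_univ_erase {δ : Q → Bool → Q} {c : Bool} {p : Q}
    (hb : Bijective (δ · !c)) (hc : univ.image (δ · c) = univ.erase p) {w : List Bool} {q : Q}
    (hw : univ.image (dw δ · w) = univ.erase q) : ∃ k, (δ · !c)^[k] p = q := by
  induction w using List.reverseRecOn generalizing q with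
  | nil => exact (univ_erase_ne_univ q (hw.symm.trans (image_dw_nil δ))).elim
  | append_singleton u x ih =>
    obtain rfl | rfl : x = c ∨ x = !c := by cases x <;> cases c <;> simp
    · refine ⟨0, by_contra fun hpq => ?_⟩
      have hsub := hw ▸ hc ▸ image_dw_append_singleton_subset δ u x
      simpa using hsub (mem_erase.2 ⟨hpq, mem_univ p⟩)
    · set e := Equiv.ofBijective _ hb
      have hu : univ.image (dw δ · u) = univ.erase (e.symm q) := by
        apply image_injective hb.1
        change (univ.image (dw δ · u)).image (dw δ · [!c]) = _
        rw [← image_dw_append, hw, image_univ_erase_of_bijective hb]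
        exact congrArg _ (e.apply_symm_apply q).symm
      obtain ⟨k, hk⟩ := ih hu
      exact ⟨k + 1, by rw [iterate_succ_apply', hk]; exact e.apply_symm_apply q⟩

end Reach

theorem binary_reachable_iff_circular [Fintype Q] [DecidableEq Q]
    (δ : Q → Bool → Q) (hQ : 2 < Fintype.card Q) :
    (∀ S : Finset Q, S.card = Fintype.card Q - 1 → reach δ S) ↔
      (∃ c : Bool, isCyclicPerm (fun q => δ q c) ∧
        ¬ isCyclicPerm (fun q => δ q (!c)) ∧
        rkl δ (!c) = Fintype.card Q - 1) := by
  have : Nonempty Q := Fintype.card_pos_iff.1 (by omega)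
  constructor
  · intro hreach
    have hreach' : ∀ q : Q, reach δ (univ.erase q) := fun q => hreach _ (by simp)
    obtain ⟨c, hc, hrk⟩ := exists_not_bijective_rkl_eq_of_reach_univ_erase δ hreach'
    have hb : Bijective (δ · !c) := by
      by_contra hb
      have := card_le_card_of_reach_univ_erase δ ((Bool.forall_bool' c).2 ⟨hc, hb⟩) hreach'
      simp only [Fintype.card_bool] at this
      omega
    obtain ⟨p, hp⟩ := exists_eq_univ_erase_of_card_eq hrk
    refine ⟨!c, isCyclicPerm_of_forall_exists_iterate_eq hb (p := p) fun q => ?_, ?_, ?_⟩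
    · obtain ⟨w, hw⟩ := hreach' q
      exact exists_iterate_eq_of_image_dw_eq_univ_erase hb hp hw
    · rw [Bool.not_not]
      exact fun h => hc h.1
    · rwa [Bool.not_not]
  · rintro ⟨c, hc, -, hrk⟩ S hS
    obtain ⟨p, hp⟩ := exists_eq_univ_erase_of_card_eq hrk
    obtain ⟨q, rfl⟩ := exists_eq_univ_erase_of_card_eq hS
    exact reach_univ_erase_of_isCyclicPerm δ hc hp q
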